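/- Assume that every admissible set of size k has infinitely many translates containing at least two primes. Then every arithmetic progression a, a+q, a+2q, ... with q dividing a and a, q positive integers contains infinitely many Polignac numbers. -/

import Mathlib

def Admissible (H : Finset ℤ) : Prop :=
  ∀ p : ℕ, p.Prime → ∃ n : ZMod p, ∀ h ∈ H, (h : ZMod p) ≠ n

def IsPolignac (m : ℕ) : Prop :=
  {p : ℕ | p.Prime ∧ (p + m).Prime}.Infinite

/-!
Take `H = {0, M, 2M, …, (k-1)M}` with `k! ∣ M`: it is admissible, since a prime `p ≤ k` divides
every element and a prime `p > k` exceeds `|H|`. Among the infinitely many translates of `H`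
containing two primes, some fixed pair `h₁ < h₂` occurs infinitely often, so the multiple
`h₂ - h₁` of `M` is a Polignac number. Choosing `M` a large multiple of `a` puts this number in
the progression `a + iq`, arbitrarily far out.
-/

open scoped Nat

/-- A negative pair `x, x + D` reflects to the positive pair `-(x + D), -x`; the signs differ only
for `x ∈ (-D, 0)`. -/
lemma int_prime_pairs_subset (D : ℕ) :
    {x : ℤ | Prime x ∧ Prime (x + D)} ⊆
      (Nat.cast '' {p : ℕ | p.Prime ∧ (p + D).Prime}) ∪
        ((fun p : ℕ => -(p : ℤ) - D) '' {p : ℕ | p.Prime ∧ (p + D).Prime}) ∪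
        Set.Ioo (-(D : ℤ)) 0 := by
  rintro x ⟨hx, hxD⟩
  rw [Int.prime_iff_natAbs_prime] at hx hxD
  rcases lt_trichotomy 0 x with hpos | rfl | hneg
  · refine Or.inl (Or.inl ⟨x.natAbs, ⟨hx, ?_⟩, by omega⟩)
    rwa [show x.natAbs + D = (x + D).natAbs by omega]
  · exact absurd hx Nat.not_prime_zero
  rcases lt_trichotomy (x + D) 0 with hDneg | hD0 | hDpos
  · refine Or.inl (Or.inr ⟨(x + D).natAbs, ⟨hxD, ?_⟩, by dsimp only; omega⟩)
    rwa [show (x + D).natAbs + D = x.natAbs by omega]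
  · rw [hD0] at hxD
    exact absurd hxD Nat.not_prime_zero
  · exact Or.inr ⟨by omega, hneg⟩

lemma isPolignac_of_infinite_int (D : ℕ) (h : {x : ℤ | Prime x ∧ Prime (x + D)}.Infinite) :
    IsPolignac D := by
  by_contra hfin
  rw [IsPolignac, Set.not_infinite] at hfin
  exact h <| (((hfin.image _).union (hfin.image _)).union (Set.finite_Ioo _ _)).subset
    (int_prime_pairs_subset D)

lemma exists_lt_infinite_of_infinite {H : Finset ℤ} {P : ℤ → Prop}
    (h : {n : ℤ | ∃ h₁ ∈ H, ∃ h₂ ∈ H, h₁ ≠ h₂ ∧ P (n + h₁) ∧ P (n + h₂)}.Infinite) :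
    ∃ h₁ ∈ H, ∃ h₂ ∈ H, h₁ < h₂ ∧ {x : ℤ | P x ∧ P (x + (h₂ - h₁))}.Infinite := by
  by_contra! hfin
  set pairs := (H ×ˢ H).filter fun p => p.1 < p.2
  have hpair : ∀ p ∈ pairs, {n : ℤ | P (n + p.1) ∧ P (n + p.2)}.Finite := by
    rintro ⟨h₁, h₂⟩ hp
    simp only [pairs, Finset.mem_filter, Finset.mem_product] at hp
    have hshift : {n : ℤ | P (n + h₁) ∧ P (n + h₂)} =
        (· + h₁) ⁻¹' {x : ℤ | P x ∧ P (x + (h₂ - h₁))} := by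
      ext n
      simp only [Set.mem_ofPred_eq, Set.mem_preimage, add_add_sub_cancel]
    rw [hshift]
    exact (hfin h₁ hp.1.1 h₂ hp.1.2 hp.2).preimage (add_left_injective h₁).injOn
  refine h ((pairs.finite_toSet.biUnion hpair).subset ?_)
  rintro n ⟨h₁, h₁H, h₂, h₂H, hne, hP₁, hP₂⟩
  simp only [pairs, Set.mem_iUnion, Finset.coe_filter, Finset.mem_product, Set.mem_ofPred_eq,
    Prod.exists]
  rcases hne.lt_or_gt with hlt | hlt
  · exact ⟨h₁, h₂, ⟨⟨h₁H, h₂H⟩, hlt⟩, hP₁, hP₂⟩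
  · exact ⟨h₂, h₁, ⟨⟨h₂H, h₁H⟩, hlt⟩, hP₂, hP₁⟩

lemma exists_zmod_forall_ne_of_card_lt {p : ℕ} [NeZero p] (H : Finset ℤ) (hH : H.card < p) :
    ∃ n : ZMod p, ∀ h ∈ H, (h : ZMod p) ≠ n := by
  have hcard : (H.image ((↑) : ℤ → ZMod p)).card < (Finset.univ : Finset (ZMod p)).card := by
    rw [Finset.card_univ, ZMod.card]
    exact Finset.card_image_le.trans_lt hH
  obtain ⟨n, -, hn⟩ := Finset.exists_mem_notMem_of_card_lt_card hcard
  exact ⟨n, fun h hH heq => hn (Finset.mem_image.mpr ⟨h, hH, heq⟩)⟩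

lemma admissible_image_range_mul {k M : ℕ} (hM : k ! ∣ M) :
    Admissible ((Finset.range k).image fun j : ℕ => (j : ℤ) * M) := by
  intro p hp
  have : Fact p.Prime := ⟨hp⟩
  by_cases hpM : p ∣ M
  · refine ⟨1, ?_⟩
    simp only [Finset.mem_image, Finset.mem_range]
    rintro _ ⟨j, -, rfl⟩
    push_cast
    rw [(ZMod.natCast_eq_zero_iff M p).mpr hpM, mul_zero]
    exact zero_ne_one
  · have hkp : k < p := by
      by_contra! hpk
      exact hpM ((Nat.dvd_factorial hp.pos hpk).trans hM)
    exact exists_zmod_forall_ne_of_card_lt _ (Finset.card_image_le.trans_lt (by simpa using hkp))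

lemma exists_isPolignac_dvd {k : ℕ}
    (hyp : ∀ H : Finset ℤ, H.card = k → Admissible H →
      {n : ℤ | ∃ h₁ ∈ H, ∃ h₂ ∈ H, h₁ ≠ h₂ ∧ Prime (n + h₁) ∧ Prime (n + h₂)}.Infinite)
    {M : ℕ} (hM : 0 < M) (hfac : k ! ∣ M) :
    ∃ D : ℕ, 0 < D ∧ M ∣ D ∧ IsPolignac D := by
  set H := (Finset.range k).image fun j : ℕ => (j : ℤ) * M
  have hinj : Function.Injective fun j : ℕ => (j : ℤ) * M := fun i j hij => by
    exact_mod_cast mul_right_cancel₀ (by positivity) hij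
  have hcard : H.card = k := by rw [Finset.card_image_of_injective _ hinj, Finset.card_range]
  have hdvd : ∀ h ∈ H, (M : ℤ) ∣ h := by
    simp only [H, Finset.mem_image]
    rintro _ ⟨j, -, rfl⟩
    exact dvd_mul_left _ _
  obtain ⟨h₁, h₁H, h₂, h₂H, hlt, hinf⟩ :=
    exists_lt_infinite_of_infinite (hyp H hcard (admissible_image_range_mul hfac))
  have hD : ((h₂ - h₁).natAbs : ℤ) = h₂ - h₁ := Int.natAbs_of_nonneg (by omega)
  refine ⟨(h₂ - h₁).natAbs, by omega, Int.natCast_dvd.mp (dvd_sub (hdvd h₂ h₂H) (hdvd h₁ h₁H)),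
    isPolignac_of_infinite_int _ ?_⟩
  rwa [hD]

theorem stmt_3_general (k : ℕ)
    (hyp : ∀ H : Finset ℤ, H.card = k → Admissible H →
      {n : ℤ | ∃ h₁ ∈ H, ∃ h₂ ∈ H, h₁ ≠ h₂ ∧ Prime (n + h₁) ∧ Prime (n + h₂)}.Infinite)
    (a q : ℕ) (ha : 0 < a) (hdvd : q ∣ a) :
    {m : ℕ | IsPolignac m ∧ ∃ i : ℕ, m = a + i * q}.Infinite := by
  refine Set.infinite_of_forall_exists_gt fun t => ?_
  obtain ⟨D, hD, hMD, hpol⟩ := exists_isPolignac_dvd hyp (M := a * (k ! * (t + 1)))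
    (by positivity) ((dvd_mul_right _ _).mul_left _)
  have haD : a ∣ D := (dvd_mul_right _ _).trans hMD
  have htD : t < D := calc
    t < t + 1 := t.lt_succ_self
    _ ≤ a * (k ! * (t + 1)) :=
      (Nat.le_mul_of_pos_left _ k.factorial_pos).trans (Nat.le_mul_of_pos_left _ ha)
    _ ≤ D := Nat.le_of_dvd hD hMD
  have haD_le : a ≤ D := Nat.le_of_dvd hD haD
  obtain ⟨i, hi⟩ := Nat.dvd_sub (hdvd.trans haD) hdvd
  exact ⟨D, ⟨hpol, i, by rw [mul_comm i q]; omega⟩, htD⟩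

theorem stmt_3 (k : ℕ) (hk : 2 ≤ k)
    (hyp : ∀ H : Finset ℤ, H.card = k → Admissible H →
      {n : ℤ | ∃ h₁ ∈ H, ∃ h₂ ∈ H, h₁ ≠ h₂ ∧ Prime (n + h₁) ∧ Prime (n + h₂)}.Infinite)
    (a q : ℕ) (ha : 0 < a) (hq : 0 < q) (hdvd : q ∣ a) :
    {m : ℕ | IsPolignac m ∧ ∃ i : ℕ, m = a + i * q}.Infinite :=
  stmt_3_general k hyp a q ha hdvd
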